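/- Let N ≥ 1, let S > 0 and σ > 0, let a, b ∈ ℝ with a² + b² = 1, and let V ∈ ℝ^N. Let τx_0,…,τx_{N−1} be independent real random variables each with law gaussianReal 0 (a²S²σ²), let τy_0,…,τy_{N−1} be independent real random variables each with law gaussianReal 0 (b²S²σ²), with all 2N variables jointly independent, and set τ_k = τx_k + i·τy_k ∈ ℂ. Then for every index j ∈ {0,…,N−1} such that N does not divide 2j, the law of Re((F⁻¹(F(V) + τ))_j) — the pushforward of the product measure ⊗_{k=0}^{N−1} (gaussianReal 0 (a²S²σ²) ⊗ gaussianReal 0 (b²S²σ²)) under the map (τx, τy) ↦ Re((F⁻¹(F(V) + τx + i·τy))_j) — is gaussianReal (V_j) (S²σ²/2). -/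

import Mathlib

/-!
Write `θₖ = 2πjk/N`. As `F⁻¹` is linear and inverts `F`, the real part of `(F⁻¹(F V + τ))_j` is
`V_j + ∑ₖ (cos θₖ · τxₖ - sin θₖ · τyₖ) / √N`, a linear form in independent centred Gaussians, hence
Gaussian with mean `V_j` and variance `(a² ∑ₖ cos² θₖ + b² ∑ₖ sin² θₖ) S²σ² / N`. If `N ∤ 2j`, then
`e^{2iθ₁}` is an `N`-th root of unity other than `1`, so `∑ₖ cos 2θₖ = 0` and both trigonometric
sums equal `N / 2`.
-/

open MeasureTheory ProbabilityTheory

/-- The unitary discrete Fourier transform on `ℂ^N`. -/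
noncomputable def dft {N : ℕ} (z : Fin N → ℂ) : Fin N → ℂ := fun i =>
  (1 / (Real.sqrt N : ℂ)) *
    ∑ n : Fin N, z n * Complex.exp (-(2 * (Real.pi : ℂ) * Complex.I * (i : ℕ) * (n : ℕ)) / N)

/-- The inverse unitary discrete Fourier transform on `ℂ^N`. -/
noncomputable def idft {N : ℕ} (z : Fin N → ℂ) : Fin N → ℂ := fun n =>
  (1 / (Real.sqrt N : ℂ)) *
    ∑ i : Fin N, z i * Complex.exp ((2 * (Real.pi : ℂ) * Complex.I * (i : ℕ) * (n : ℕ)) / N)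

open scoped NNReal

namespace ProbabilityTheory

lemma map_sum_pi_gaussianReal {ι : Type*} [Fintype ι] (m : ι → ℝ) (v : ι → ℝ≥0) :
    (Measure.pi fun i ↦ gaussianReal (m i) (v i)).map (fun x ↦ ∑ i, x i)
      = gaussianReal (∑ i, m i) (∑ i, v i) := by
  refine Measure.ext_of_charFun ?_
  ext t
  simp only [charFun_map_sum_pi_eq_prod, Finset.prod_apply, charFun_gaussianReal,
    ← Complex.exp_sum]
  push_cast
  congr 1
  simp only [Finset.sum_sub_distrib, Finset.sum_div, Finset.mul_sum, Finset.sum_mul]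

lemma map_linear_prod_gaussianReal (c d m₁ m₂ : ℝ) (v₁ v₂ : ℝ≥0) :
    ((gaussianReal m₁ v₁).prod (gaussianReal m₂ v₂)).map (fun p ↦ c * p.1 + d * p.2)
      = gaussianReal (c * m₁ + d * m₂)
          (.mk (c ^ 2) (sq_nonneg c) * v₁ + .mk (d ^ 2) (sq_nonneg d) * v₂) := by
  rw [← gaussianReal_conv_gaussianReal, ← gaussianReal_map_const_mul, ← gaussianReal_map_const_mul,
    Measure.conv, Measure.map_prod_map _ _ (measurable_const_mul c) (measurable_const_mul d),
    Measure.map_map measurable_add ((measurable_const_mul c).prodMap (measurable_const_mul d))]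
  rfl

lemma map_sum_pi_linear_prod_gaussianReal {ι : Type*} [Fintype ι] (c d : ι → ℝ) (m₁ m₂ : ℝ)
    (v₁ v₂ : ℝ≥0) :
    (Measure.pi fun _ : ι ↦ (gaussianReal m₁ v₁).prod (gaussianReal m₂ v₂)).map
        (fun τ ↦ ∑ i, (c i * (τ i).1 + d i * (τ i).2))
      = gaussianReal (∑ i, (c i * m₁ + d i * m₂))
          (∑ i, (.mk (c i ^ 2) (sq_nonneg _) * v₁ + .mk (d i ^ 2) (sq_nonneg _) * v₂)) := by
  have hL (i : ι) : Measurable fun p : ℝ × ℝ ↦ c i * p.1 + d i * p.2 := by fun_prop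
  rw [← map_sum_pi_gaussianReal,
    ← funext fun i ↦ map_linear_prod_gaussianReal (c i) (d i) m₁ m₂ v₁ v₂,
    ← Measure.pi_map_pi fun i ↦ (hL i).aemeasurable, Measure.map_map (by fun_prop) (by fun_prop)]
  rfl

end ProbabilityTheory

open Complex Real

lemma sum_exp_two_pi_I_mul {N : ℕ} (hN : N ≠ 0) (m : ℤ) :
    ∑ k : Fin N, cexp (2 * π * I * m * k / N) = if (N : ℤ) ∣ m then (N : ℂ) else 0 := by
  have hζ := Complex.isPrimitiveRoot_exp N hN
  set ω := cexp (2 * π * I / N) ^ m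
  have hωN : ω ^ N = 1 := by
    rw [← zpow_natCast, ← zpow_mul, mul_comm m, zpow_mul, zpow_natCast, hζ.pow_eq_one, one_zpow]
  have hpow (k : ℕ) : cexp (2 * π * I * m * k / N) = ω ^ k := by
    rw [← zpow_natCast, ← zpow_mul, ← Complex.exp_int_mul]
    push_cast
    ring_nf
  simp only [hpow, Fin.sum_univ_eq_sum_range (ω ^ ·)]
  split_ifs with hm
  · simp [ω, (hζ.zpow_eq_one_iff_dvd m).2 hm]
  · have hω : ω ≠ 1 := mt (hζ.zpow_eq_one_iff_dvd m).1 hm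
    rw [geom_sum_eq hω, hωN, sub_self, zero_div]

lemma sum_cos_two_pi_mul {N : ℕ} (hN : N ≠ 0) {m : ℤ} (hm : ¬ (N : ℤ) ∣ m) :
    ∑ k : Fin N, Real.cos (2 * π * m * k / N) = 0 := by
  have h := congrArg Complex.re (sum_exp_two_pi_I_mul hN m)
  rw [if_neg hm, Complex.re_sum, Complex.zero_re] at h
  rw [← h]
  refine Finset.sum_congr rfl fun k _ ↦ ?_
  rw [show 2 * π * I * m * k / N = ((2 * π * m * k / N : ℝ) : ℂ) * I by push_cast; ring,
    Complex.exp_ofReal_mul_I_re]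

lemma sum_cos_sq_two_pi_mul {N j : ℕ} (hj : ¬ N ∣ 2 * j) :
    ∑ k : Fin N, Real.cos (2 * π * j * k / N) ^ 2 = N / 2 := by
  obtain rfl | hN := eq_or_ne N 0
  · simp
  have h := sum_cos_two_pi_mul hN (m := 2 * j) (by exact_mod_cast hj)
  simp only [Real.cos_sq, Finset.sum_add_distrib, ← Finset.sum_div]
  rw [show ∑ k : Fin N, Real.cos (2 * (2 * π * j * k / N)) = 0 by
    rw [← h]; congr 1; ext k; congr 1; push_cast; ring]
  simp

lemma sum_sin_sq_two_pi_mul {N j : ℕ} (hj : ¬ N ∣ 2 * j) :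
    ∑ k : Fin N, Real.sin (2 * π * j * k / N) ^ 2 = N / 2 := by
  simp only [Real.sin_sq, Finset.sum_sub_distrib, sum_cos_sq_two_pi_mul hj]
  simp only [Finset.sum_const, Finset.card_univ, Fintype.card_fin, nsmul_eq_mul, mul_one]
  ring

lemma Fin.intCast_dvd_sub_iff {N : ℕ} (m n : Fin N) : (N : ℤ) ∣ (n : ℤ) - m ↔ m = n :=
  ⟨fun h ↦ Fin.ext ((Nat.modEq_iff_dvd.2 h).eq_of_lt_of_lt m.2 n.2), fun h ↦ by simp [h]⟩

lemma idft_dft {N : ℕ} (f : Fin N → ℂ) : idft (dft f) = f := by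
  ext n
  have hN : (N : ℂ) ≠ 0 := Nat.cast_ne_zero.2 (Fin.pos n).ne'
  have hsqrt : (√N : ℂ) * √N = N := by
    rw [← Complex.ofReal_mul, Real.mul_self_sqrt N.cast_nonneg, Complex.ofReal_natCast]
  have hkernel (i m : Fin N) :
      cexp (-(2 * π * I * (i : ℕ) * (m : ℕ)) / N) * cexp (2 * π * I * (i : ℕ) * (n : ℕ) / N)
        = cexp (2 * π * I * ((n : ℤ) - (m : ℤ) : ℤ) * (i : ℕ) / N) := by
    rw [← Complex.exp_add]; push_cast; ring_nf
  calc idft (dft f) n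
      = 1 / (√N * √N) * ∑ m, f m * ∑ i : Fin N,
          cexp (2 * π * I * ((n : ℤ) - (m : ℤ) : ℤ) * (i : ℕ) / N) := by
        simp only [idft, dft, Finset.mul_sum, Finset.sum_mul, ← hkernel]
        rw [Finset.sum_comm]
        refine Finset.sum_congr rfl fun m _ ↦ Finset.sum_congr rfl fun i _ ↦ ?_
        ring
    _ = f n := by
        simp only [sum_exp_two_pi_I_mul (Fin.pos n).ne', Fin.intCast_dvd_sub_iff, mul_ite,
          mul_zero, Finset.sum_ite_eq', Finset.mem_univ, if_true, hsqrt]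
        field_simp

lemma idft_add {N : ℕ} (z w : Fin N → ℂ) : idft (z + w) = idft z + idft w := by
  ext n
  simp only [idft, Pi.add_apply, add_mul, Finset.sum_add_distrib, mul_add]

lemma re_idft_ofReal_add_I_mul {N : ℕ} (x y : Fin N → ℝ) (n : Fin N) :
    (idft (fun k ↦ (x k : ℂ) + I * y k) n).re
      = ∑ k : Fin N, (Real.cos (2 * π * n * k / N) / √N * x k
          + -(Real.sin (2 * π * n * k / N) / √N) * y k) := by
  rw [idft, show (1 / (√N : ℂ)) = ((1 / √N : ℝ) : ℂ) by push_cast; rfl, re_ofReal_mul, re_sum,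
    Finset.mul_sum]
  refine Finset.sum_congr rfl fun k _ ↦ ?_
  rw [show 2 * π * I * (k : ℕ) * (n : ℕ) / N = ((2 * π * n * k / N : ℝ) : ℂ) * I by push_cast; ring,
    mul_re, exp_ofReal_mul_I_re, exp_ofReal_mul_I_im]
  simp only [one_div, add_re, ofReal_re, mul_re, I_re, zero_mul, I_im, ofReal_im, mul_zero,
    sub_self, add_zero, add_im, mul_im, one_mul, zero_add, neg_mul]
  ring

theorem gredp_general_general (N : ℕ) (S σ : ℝ)
    (a b : ℝ) (hab : a ^ 2 + b ^ 2 = 1) (V : Fin N → ℝ) (j : Fin N)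
    (hj : ¬ (N ∣ 2 * (j : ℕ))) :
    Measure.map
      (fun τ : Fin N → ℝ × ℝ =>
        (idft (fun k => dft (fun n => (V n : ℂ)) k
          + (((τ k).1 : ℂ) + Complex.I * ((τ k).2 : ℂ))) j).re)
      (Measure.pi (fun _ : Fin N =>
        (gaussianReal 0 ((a ^ 2 * S ^ 2 * σ ^ 2).toNNReal)).prod
          (gaussianReal 0 ((b ^ 2 * S ^ 2 * σ ^ 2).toNNReal))))
      = gaussianReal (V j) ((S ^ 2 * σ ^ 2 / 2).toNNReal) := by
  set c : Fin N → ℝ := fun k ↦ Real.cos (2 * π * j * k / N) / √N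
  set d : Fin N → ℝ := fun k ↦ -(Real.sin (2 * π * j * k / N) / √N)
  have hfun : (fun τ : Fin N → ℝ × ℝ ↦
        (idft (fun k ↦ dft (fun n ↦ (V n : ℂ)) k + (((τ k).1 : ℂ) + I * ((τ k).2 : ℂ))) j).re)
      = (V j + ·) ∘ fun τ ↦ ∑ k, (c k * (τ k).1 + d k * (τ k).2) := by
    ext τ
    rw [← Pi.add_def, idft_add, idft_dft, Pi.add_apply, add_re, ofReal_re,
      re_idft_ofReal_add_I_mul (fun k ↦ (τ k).1) (fun k ↦ (τ k).2)]
    rfl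
  rw [hfun, ← Measure.map_map (measurable_const_add _) (by fun_prop),
    map_sum_pi_linear_prod_gaussianReal, gaussianReal_map_const_add]
  congr 1
  · simp
  · have hN : (0 : ℝ) < N := by exact_mod_cast j.pos
    ext
    simp only [NNReal.coe_sum, NNReal.coe_add, NNReal.coe_mul, NNReal.coe_mk,
      Real.coe_toNNReal _ (by positivity : 0 ≤ a ^ 2 * S ^ 2 * σ ^ 2),
      Real.coe_toNNReal _ (by positivity : 0 ≤ b ^ 2 * S ^ 2 * σ ^ 2),
      Real.coe_toNNReal _ (by positivity : 0 ≤ S ^ 2 * σ ^ 2 / 2),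
      c, d, neg_sq, div_pow, Real.sq_sqrt hN.le, Finset.sum_add_distrib, ← Finset.sum_mul,
      ← Finset.sum_div, sum_cos_sq_two_pi_mul hj, sum_sin_sq_two_pi_mul hj]
    field_simp
    linear_combination S ^ 2 * σ ^ 2 * hab

/-- Theorem 2 of the paper: adding complex Gaussian noise whose real and imaginary parts
have variances `a²S²σ²` and `b²S²σ²` with `a² + b² = 1` in the frequency domain, inverting
the transform, and keeping only the real part yields `V_j` perturbed by a real Gaussian of
variance `S²σ²/2`, for every coordinate `j` with `N ∤ 2j`. -/
theorem gredp_general (N : ℕ) (hN : 1 ≤ N) (S σ : ℝ) (hS : 0 < S) (hσ : 0 < σ)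
    (a b : ℝ) (hab : a ^ 2 + b ^ 2 = 1) (V : Fin N → ℝ) (j : Fin N)
    (hj : ¬ (N ∣ 2 * (j : ℕ))) :
    Measure.map
      (fun τ : Fin N → ℝ × ℝ =>
        (idft (fun k => dft (fun n => (V n : ℂ)) k
          + (((τ k).1 : ℂ) + Complex.I * ((τ k).2 : ℂ))) j).re)
      (Measure.pi (fun _ : Fin N =>
        (gaussianReal 0 ((a ^ 2 * S ^ 2 * σ ^ 2).toNNReal)).prod
          (gaussianReal 0 ((b ^ 2 * S ^ 2 * σ ^ 2).toNNReal))))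
      = gaussianReal (V j) ((S ^ 2 * σ ^ 2 / 2).toNNReal) :=
  gredp_general_general N S σ a b hab V j hj
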